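/- arXiv:2508.07761 — 2 statements merged into one kernel-verified Lean document; each statement's English description precedes it below -/
import Mathlib

section
/- Let A and B be nonnegative self-adjoint operators on Hilbert spaces given as A = S*S and B = SS* for a closed densely defined operator S between Hilbert spaces H and K. Then the spectra of A and B agree away from zero: σ(S*S) \ {0} = σ(SS*) \ {0}. -/
open Filter Topology

noncomputable section

local notation "⟪" x ", " y "⟫" => @inner ℝ _ _ x y

namespace SpecAux

variable {E F : Type*} [NormedAddCommGroup E] [InnerProductSpace ℝ E]
    [NormedAddCommGroup F] [InnerProductSpace ℝ F] [CompleteSpace E] [CompleteSpace F]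

theorem isClosed_limit {T : E →ₗ.[ℝ] F} (h : T.IsClosed) {u : ℕ → E} {v : ℕ → F}
    {x : E} {y : F} (hu : ∀ n, u n ∈ T.domain) (hv : ∀ n, T ⟨u n, hu n⟩ = v n)
    (hx : Tendsto u atTop (𝓝 x)) (hy : Tendsto v atTop (𝓝 y)) :
    ∃ hx' : x ∈ T.domain, T ⟨x, hx'⟩ = y := by
  have hmem : (x, y) ∈ T.graph := by
    have hcl : (x, y) ∈ closure (T.graph : Set (E × F)) := by
      refine mem_closure_of_tendsto (hx.prodMk_nhds hy) ?_
      refine Filter.Eventually.of_forall fun n => ?_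
      have := T.mem_graph ⟨u n, hu n⟩
      rwa [hv n] at this
    rwa [h.closure_eq] at hcl
  rcases T.mem_graph_iff.mp hmem with ⟨z, hz1, hz2⟩
  dsimp at hz1 hz2
  subst hz1
  exact ⟨z.2, hz2⟩

theorem adjoint_isClosed {S : E →ₗ.[ℝ] F} (hdense : Dense (S.domain : Set E)) :
    S.adjoint.IsClosed := by
  have hset : (S.adjoint.graph : Set (F × E)) =
      ⋂ (x : S.domain), {p : F × E | ⟪p.2, (x : E)⟫ = ⟪p.1, S x⟫} := by
    ext p
    simp only [Set.mem_iInter, SetLike.mem_coe, Set.mem_setOf_eq]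
    constructor
    · intro hp x
      rcases S.adjoint.mem_graph_iff.mp hp with ⟨z, hz1, hz2⟩
      rw [← hz1, ← hz2]
      exact (LinearPMap.adjoint_isFormalAdjoint hdense) z x
    · intro hp
      have hmem : p.1 ∈ S.adjoint.domain :=
        LinearPMap.mem_adjoint_domain_of_exists _ ⟨p.2, fun x => hp x⟩
      have hval : S.adjoint ⟨p.1, hmem⟩ = p.2 :=
        LinearPMap.adjoint_apply_eq hdense _ fun x => hp x
      exact S.adjoint.mem_graph_iff.mpr ⟨⟨p.1, hmem⟩, rfl, hval⟩
  rw [LinearPMap.IsClosed, hset]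
  exact isClosed_iInter fun x =>
    isClosed_eq (continuous_snd.inner continuous_const) (continuous_fst.inner continuous_const)


theorem adjoint_dense {S : E →ₗ.[ℝ] F} (hdense : Dense (S.domain : Set E))
    (hclosed : S.IsClosed) : Dense (S.adjoint.domain : Set F) := by
  have key : ∀ v : F, (∀ w : S.adjoint.domain, ⟪v, (w : F)⟫ = 0) → v = 0 := by
    intro v hv
    set e := (WithLp.prodContinuousLinearEquiv 2 ℝ E F) with he
    set Γ : Submodule ℝ (WithLp 2 (E × F)) :=
      S.graph.comap (e : WithLp 2 (E × F) →ₗ[ℝ] E × F) with hΓ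
    have hΓclosed : IsClosed (Γ : Set (WithLp 2 (E × F))) :=
      hclosed.preimage e.continuous
    haveI : CompleteSpace Γ := hΓclosed.completeSpace_coe
    have horth : e.symm (0, v) ∈ Γᗮᗮ := by
      rw [Submodule.mem_orthogonal]
      intro w hw
      have hrel : ∀ x : S.domain, ⟪(x : E), (e w).1⟫ + ⟪S x, (e w).2⟫ = 0 := by
        intro x
        have hgx : e.symm ((x : E), S x) ∈ Γ := by
          rw [hΓ, Submodule.mem_comap]
          show ((x : E), S x) ∈ S.graph
          exact S.mem_graph x
        have h0 := (Submodule.mem_orthogonal Γ w).mp hw _ hgx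
        rw [WithLp.prod_inner_apply] at h0
        exact h0
      have hb : (e w).2 ∈ S.adjoint.domain := by
        apply LinearPMap.mem_adjoint_domain_of_exists
        refine ⟨-(e w).1, fun x => ?_⟩
        have h1 := hrel x
        rw [inner_neg_left]
        have h2 := real_inner_comm ((e w).2) (S x)
        have h3 := real_inner_comm ((e w).1) ((x : E))
        linarith
      rw [WithLp.prod_inner_apply]
      show ⟪(e w).1, (0 : E)⟫ + ⟪(e w).2, v⟫ = 0
      rw [inner_zero_right, real_inner_comm, hv ⟨(e w).2, hb⟩, add_zero]
    rw [Submodule.orthogonal_orthogonal] at horth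
    have hg : (0, v) ∈ S.graph := by
      have : e (e.symm (0, v)) ∈ S.graph := horth
      rwa [e.apply_symm_apply] at this
    rcases S.mem_graph_iff.mp hg with ⟨z, hz1, hz2⟩
    dsimp at hz1 hz2
    have hz0 : z = 0 := Subtype.ext (by simpa using hz1)
    rw [hz0, S.map_zero] at hz2
    exact hz2.symm
  have horth_bot : (S.adjoint.domain)ᗮ = ⊥ := by
    rw [Submodule.eq_bot_iff]
    intro v hv
    exact key v fun w => (Submodule.mem_orthogonal' _ _).mp hv _ w.2
  rw [Submodule.dense_iff_topologicalClosure_eq_top,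
    ← Submodule.orthogonal_orthogonal_eq_closure, horth_bot, Submodule.bot_orthogonal_eq_top]


set_option maxHeartbeats 1000000 in
theorem pairCore (T : E →ₗ.[ℝ] F) (U : F →ₗ.[ℝ] E)
    (hTU : ∀ (v : T.domain) (z : U.domain), ⟪T v, (z : F)⟫ = ⟪(v : E), U z⟫)
    (hUdense : Dense (U.domain : Set F))
    (hTc : T.IsClosed) (hUc : U.IsClosed)
    (l : ℝ) (hl : l ≠ 0)
    (B : E →L[ℝ] E) (hB : ∀ x : E, B x ∈ T.domain)
    (hB' : ∀ x : E, T ⟨B x, hB x⟩ ∈ U.domain)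
    (heq1 : ∀ x : E, U ⟨T ⟨B x, hB x⟩, hB' x⟩ - l • B x = x)
    (heq2 : ∀ (y : T.domain) (hy : T y ∈ U.domain), B (U ⟨T y, hy⟩ - l • (y : E)) = y) :
    ∃ C : F →L[ℝ] F, ∃ hC : ∀ x : F, C x ∈ U.domain,
      ∃ hC' : ∀ x : F, U ⟨C x, hC x⟩ ∈ T.domain,
        (∀ x : F, T ⟨U ⟨C x, hC x⟩, hC' x⟩ - l • C x = x) ∧
        (∀ (y : U.domain) (hy : U y ∈ T.domain), C (T ⟨U y, hy⟩ - l • (y : F)) = y) := by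
  clear heq2
  -- pairing the other way
  have hUS : ∀ (z : U.domain) (v : T.domain), ⟪U z, (v : E)⟫ = ⟪(z : F), T v⟫ := by
    intro z v
    rw [real_inner_comm, ← hTU v z, real_inner_comm]
  have heq1' : ∀ x : E, U ⟨T ⟨B x, hB x⟩, hB' x⟩ = x + l • B x :=
    fun x => sub_eq_iff_eq_add.mp (heq1 x)
  -- B is self-adjoint
  have hBsym0 : ∀ x y : E,
      ⟪B x, y⟫ = ⟪T ⟨B x, hB x⟩, T ⟨B y, hB y⟩⟫ - l * ⟪B x, B y⟫ := by
    intro x y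
    conv_lhs => rw [← heq1 y]
    rw [inner_sub_right, real_inner_smul_right]
    congr 1
    calc ⟪B x, U ⟨T ⟨B y, hB y⟩, hB' y⟩⟫
        = ⟪U ⟨T ⟨B y, hB y⟩, hB' y⟩, B x⟫ := real_inner_comm _ _
      _ = ⟪T ⟨B y, hB y⟩, T ⟨B x, hB x⟩⟫ := hUS ⟨T ⟨B y, hB y⟩, hB' y⟩ ⟨B x, hB x⟩
      _ = ⟪T ⟨B x, hB x⟩, T ⟨B y, hB y⟩⟫ := real_inner_comm _ _
  have hBsym : ∀ x y : E, ⟪B x, y⟫ = ⟪x, B y⟫ := by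
    intro x y
    have h1 := hBsym0 x y
    have h2 := hBsym0 y x
    rw [real_inner_comm (B x) (B y),
      real_inner_comm ((T ⟨B x, hB x⟩ : F)) ((T ⟨B y, hB y⟩ : F))] at h2
    rw [h1, real_inner_comm (B y) x, h2]
  -- the bounded operator G = T ∘ B
  have hGnormsq : ∀ x : E,
      ‖T ⟨B x, hB x⟩‖ ^ 2 ≤ (‖B‖ + |l| * ‖B‖ ^ 2) * ‖x‖ ^ 2 := by
    intro x
    have h2 : ⟪T ⟨B x, hB x⟩, T ⟨B x, hB x⟩⟫ = ⟪B x, x + l • B x⟫ := by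
      rw [hTU ⟨B x, hB x⟩ ⟨T ⟨B x, hB x⟩, hB' x⟩, heq1' x]
    rw [← real_inner_self_eq_norm_sq, h2, inner_add_right, real_inner_smul_right]
    have h3 : ⟪B x, x⟫ ≤ ‖B‖ * ‖x‖ ^ 2 := by
      calc ⟪B x, x⟫ ≤ ‖B x‖ * ‖x‖ := real_inner_le_norm _ _
        _ ≤ (‖B‖ * ‖x‖) * ‖x‖ := by
            have := B.le_opNorm x
            nlinarith [norm_nonneg x]
        _ = ‖B‖ * ‖x‖ ^ 2 := by ring
    have h4 : l * ⟪B x, B x⟫ ≤ |l| * ‖B‖ ^ 2 * ‖x‖ ^ 2 := by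
      rw [real_inner_self_eq_norm_sq]
      have h5 : l * ‖B x‖ ^ 2 ≤ |l| * ‖B x‖ ^ 2 := by
        nlinarith [le_abs_self l, sq_nonneg ‖B x‖]
      have h6 := B.le_opNorm x
      nlinarith [abs_nonneg l, norm_nonneg (B x), norm_nonneg x, norm_nonneg B,
        mul_le_mul h6 h6 (norm_nonneg _) (mul_nonneg (norm_nonneg _) (norm_nonneg _))]
    nlinarith
  set c : ℝ := Real.sqrt (‖B‖ + |l| * ‖B‖ ^ 2) with hc
  have hGbound : ∀ x : E, ‖T ⟨B x, hB x⟩‖ ≤ c * ‖x‖ := by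
    intro x
    have h0 : (0:ℝ) ≤ ‖B‖ + |l| * ‖B‖ ^ 2 := by positivity
    calc ‖T ⟨B x, hB x⟩‖ = Real.sqrt (‖T ⟨B x, hB x⟩‖ ^ 2) :=
          (Real.sqrt_sq (norm_nonneg _)).symm
      _ ≤ Real.sqrt ((‖B‖ + |l| * ‖B‖ ^ 2) * ‖x‖ ^ 2) := Real.sqrt_le_sqrt (hGnormsq x)
      _ = c * ‖x‖ := by
          rw [Real.sqrt_mul h0, Real.sqrt_sq (norm_nonneg x)]
  set Glin : E →ₗ[ℝ] F :=
    { toFun := fun x => T ⟨B x, hB x⟩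
      map_add' := by
        intro x y
        have hxy : (⟨B (x + y), hB (x + y)⟩ : T.domain) = ⟨B x, hB x⟩ + ⟨B y, hB y⟩ :=
          Subtype.ext (by simp)
        rw [hxy, T.map_add]
      map_smul' := by
        intro m x
        have hxy : (⟨B (m • x), hB (m • x)⟩ : T.domain) = m • ⟨B x, hB x⟩ :=
          Subtype.ext (by simp)
        rw [hxy, T.map_smul]
        rfl } with hGlin
  set G : E →L[ℝ] F := Glin.mkContinuous c hGbound with hG
  have hGapp : ∀ x : E, G x = T ⟨B x, hB x⟩ := fun x => rfl
  set G' : F →L[ℝ] E := ContinuousLinearMap.adjoint G with hG'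
  have hGadj : ∀ z : U.domain, G' (z : F) = B (U z) := by
    intro z
    refine ext_inner_right ℝ fun y => ?_
    calc ⟪G' (z : F), y⟫ = ⟪(z : F), G y⟫ := ContinuousLinearMap.adjoint_inner_left G y z
      _ = ⟪(z : F), T ⟨B y, hB y⟩⟫ := by rw [hGapp]
      _ = ⟪U z, B y⟫ := (hUS z ⟨B y, hB y⟩).symm
      _ = ⟪B (U z), y⟫ := by rw [real_inner_comm, hBsym (U z) y, real_inner_comm]
  clear_value G' G
  clear hG hG' hGnormsq
  -- C0 : the candidate inverse on U.domain
  set C0lin : U.domain →ₗ[ℝ] F :=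
    (l⁻¹ : ℝ) • (G.toLinearMap.comp U.toFun - U.domain.subtype) with hC0lin
  have hC0app : ∀ z : U.domain, C0lin z = l⁻¹ • (G (U z) - (z : F)) := fun z => rfl
  set a : ℝ := Real.sqrt |l| * ‖G'‖ with ha
  have ha0 : 0 ≤ a := mul_nonneg (Real.sqrt_nonneg _) (norm_nonneg _)
  have hGU : ∀ z : U.domain, ‖G (U z)‖ ≤ (1 + a) * ‖(z : F)‖ := by
    intro z
    set t := ‖G (U z)‖ with htdef
    set n := ‖(z : F)‖ with hndef
    have ht : 0 ≤ t := norm_nonneg _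
    have hn : 0 ≤ n := norm_nonneg _
    clear_value t n
    have htn : t ^ 2 ≤ n * t + a ^ 2 * n ^ 2 := by
      have e1 : ⟪G (U z), G (U z)⟫ = ⟪B (U z), U z⟫ + l * ⟪B (U z), B (U z)⟫ := by
        rw [hGapp (U z)]
        calc ⟪(T ⟨B (U z), hB (U z)⟩ : F), (T ⟨B (U z), hB (U z)⟩ : F)⟫
            = ⟪B (U z), U ⟨T ⟨B (U z), hB (U z)⟩, hB' (U z)⟩⟫ :=
              hTU ⟨B (U z), hB (U z)⟩ ⟨T ⟨B (U z), hB (U z)⟩, hB' (U z)⟩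
          _ = ⟪B (U z), U z + l • B (U z)⟫ := by rw [heq1' (U z)]
          _ = ⟪B (U z), U z⟫ + l * ⟪B (U z), B (U z)⟫ := by
              rw [inner_add_right, real_inner_smul_right]
      have e2 : ⟪B (U z), U z⟫ ≤ n * t := by
        rw [hndef, htdef]
        have h := hUS z ⟨B (U z), hB (U z)⟩
        rw [← hGapp (U z)] at h
        calc ⟪B (U z), U z⟫ = ⟪U z, B (U z)⟫ := real_inner_comm _ _
          _ = ⟪(z : F), G (U z)⟫ := h
          _ ≤ ‖(z : F)‖ * ‖G (U z)‖ := real_inner_le_norm _ _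
      have e3 : l * ⟪B (U z), B (U z)⟫ ≤ a ^ 2 * n ^ 2 := by
        have hBG : B (U z) = G' (z : F) := (hGadj z).symm
        have ha2 : a ^ 2 = |l| * ‖G'‖ ^ 2 := by
          rw [ha, mul_pow, Real.sq_sqrt (abs_nonneg l)]
        rw [hBG, real_inner_self_eq_norm_sq, ha2]
        have h6 : ‖G' (z : F)‖ ≤ ‖G'‖ * n := by rw [hndef]; exact G'.le_opNorm _
        have h5 : l * ‖G' (z : F)‖ ^ 2 ≤ |l| * ‖G' (z : F)‖ ^ 2 :=
          mul_le_mul_of_nonneg_right (le_abs_self l) (sq_nonneg _)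
        have h7 : ‖G' (z : F)‖ ^ 2 ≤ ‖G'‖ ^ 2 * n ^ 2 := by
          have h8 := pow_le_pow_left₀ (norm_nonneg _) h6 2
          rwa [mul_pow] at h8
        calc l * ‖G' (z : F)‖ ^ 2 ≤ |l| * ‖G' (z : F)‖ ^ 2 := h5
          _ ≤ |l| * (‖G'‖ ^ 2 * n ^ 2) :=
              mul_le_mul_of_nonneg_left h7 (abs_nonneg l)
          _ = |l| * ‖G'‖ ^ 2 * n ^ 2 := (mul_assoc _ _ _).symm
      have e0 : t ^ 2 = ⟪G (U z), G (U z)⟫ := by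
        rw [htdef]; exact (real_inner_self_eq_norm_sq _).symm
      linarith [e0, e1, e2, e3]
    nlinarith [htn, ht, hn, ha0, mul_nonneg ha0 hn,
      mul_nonneg (mul_nonneg ha0 hn) hn, sq_nonneg (t - n - a * n)]
  have hC0bound : ∀ z : U.domain, ‖C0lin z‖ ≤ (|l|⁻¹ * (2 + a)) * ‖z‖ := by
    intro z
    have hzn : ‖z‖ = ‖(z : F)‖ := rfl
    rw [hC0app z, norm_smul, hzn]
    have h1 : ‖G (U z) - (z : F)‖ ≤ (2 + a) * ‖(z : F)‖ := by
      calc ‖G (U z) - (z : F)‖ ≤ ‖G (U z)‖ + ‖(z : F)‖ := norm_sub_le _ _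
        _ ≤ (1 + a) * ‖(z : F)‖ + ‖(z : F)‖ := by linarith [hGU z]
        _ = (2 + a) * ‖(z : F)‖ := by ring
    have h2 : ‖(l⁻¹ : ℝ)‖ = |l|⁻¹ := by rw [Real.norm_eq_abs, abs_inv]
    rw [h2, mul_assoc]
    have h3 : (0:ℝ) ≤ |l|⁻¹ := by positivity
    exact mul_le_mul_of_nonneg_left h1 h3
  set C0 : U.domain →L[ℝ] F := C0lin.mkContinuous _ hC0bound with hC0
  have hC0eq : ∀ z : U.domain, C0 z = l⁻¹ • (G (U z) - (z : F)) := fun z => rfl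
  set C : F →L[ℝ] F := C0.extend (Submodule.subtypeL U.domain) with hCdef
  have hCeq : ∀ z : U.domain, C (z : F) = C0 z := fun z =>
    ContinuousLinearMap.extend_eq _ hUdense.denseRange_val
      isUniformEmbedding_subtype_val.isUniformInducing _
  have hC0mem : ∀ z : U.domain, C0 z ∈ U.domain := by
    intro z
    have h : C0 z = l⁻¹ • (T ⟨B (U z), hB (U z)⟩ - (z : F)) := by
      rw [hC0eq z, hGapp (U z)]
    rw [h]
    exact Submodule.smul_mem _ _ (Submodule.sub_mem _ (hB' (U z)) z.2)
  have hUC0 : ∀ z : U.domain, U ⟨C0 z, hC0mem z⟩ = B (U z) := by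
    intro z
    have hz : (⟨C0 z, hC0mem z⟩ : U.domain)
        = l⁻¹ • ((⟨T ⟨B (U z), hB (U z)⟩, hB' (U z)⟩ : U.domain) - z) :=
      Subtype.ext (by push_cast; rw [hC0eq z, hGapp (U z)])
    rw [hz, U.map_smul, U.map_sub, heq1' (U z), add_sub_cancel_left, smul_smul,
      inv_mul_cancel₀ hl, one_smul]
  have hGC0 : ∀ z : U.domain, G (U z) = l • C0 z + (z : F) := by
    intro z
    rw [hC0eq z, smul_smul, mul_inv_cancel₀ hl, one_smul]
    exact (sub_add_cancel _ _).symm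
  -- main identity for all x
  have main : ∀ x : F, ∃ h1 : C x ∈ U.domain, ∃ h2 : U ⟨C x, h1⟩ ∈ T.domain,
      T ⟨U ⟨C x, h1⟩, h2⟩ - l • C x = x := by
    intro x
    obtain ⟨u, humem, hutend⟩ := mem_closure_iff_seq_limit.mp (hUdense x)
    set z : ℕ → U.domain := fun n => ⟨u n, humem n⟩ with hzdef
    have h1 : ∀ n, C0 (z n) ∈ U.domain := fun n => hC0mem (z n)
    have hv1 : ∀ n, U ⟨C0 (z n), h1 n⟩ = G' (u n) := by
      intro n
      rw [hUC0 (z n)]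
      exact (hGadj (z n)).symm
    have hx1 : Tendsto (fun n => C0 (z n)) atTop (𝓝 (C x)) := by
      have he : (fun n => C0 (z n)) = fun n => C (u n) :=
        funext fun n => (hCeq (z n)).symm
      rw [he]
      exact (C.continuous.tendsto x).comp hutend
    have hy1 : Tendsto (fun n => G' (u n)) atTop (𝓝 (G' x)) :=
      (G'.continuous.tendsto x).comp hutend
    obtain ⟨hCxmem, hUCx⟩ := isClosed_limit hUc h1 hv1 hx1 hy1
    have h2 : ∀ n, G' (u n) ∈ T.domain := by
      intro n
      rw [hGadj (z n)]
      exact hB (U (z n))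
    have hv2 : ∀ n, T ⟨G' (u n), h2 n⟩ = l • C0 (z n) + u n := by
      intro n
      have he : (⟨G' (u n), h2 n⟩ : T.domain) = ⟨B (U (z n)), hB (U (z n))⟩ :=
        Subtype.ext (hGadj (z n))
      rw [he, ← hGapp (U (z n))]
      exact hGC0 (z n)
    have hy2 : Tendsto (fun n => l • C0 (z n) + u n) atTop (𝓝 (l • C x + x)) :=
      (hx1.const_smul l).add hutend
    obtain ⟨hmemT, hTval⟩ := isClosed_limit hTc h2 hv2 hy1 hy2
    refine ⟨hCxmem, hUCx ▸ hmemT, ?_⟩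
    have he2 : (⟨U ⟨C x, hCxmem⟩, hUCx ▸ hmemT⟩ : T.domain) = ⟨G' x, hmemT⟩ :=
      Subtype.ext hUCx
    rw [he2, hTval, add_sub_cancel_left]
  -- symmetry of C
  have hC0sym : ∀ z w : U.domain, ⟪C0 z, (w : F)⟫ = ⟪(z : F), C0 w⟫ := by
    intro z w
    have hkey : ⟪G (U z), (w : F)⟫ = ⟪(z : F), G (U w)⟫ := by
      rw [hGapp (U z), hGapp (U w)]
      calc ⟪(T ⟨B (U z), hB (U z)⟩ : F), (w : F)⟫
          = ⟪B (U z), U w⟫ := hTU ⟨B (U z), hB (U z)⟩ w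
        _ = ⟪U z, B (U w)⟫ := hBsym (U z) (U w)
        _ = ⟪(z : F), (T ⟨B (U w), hB (U w)⟩ : F)⟫ := hUS z ⟨B (U w), hB (U w)⟩
    rw [hC0eq z, hC0eq w, real_inner_smul_left, real_inner_smul_right,
      inner_sub_left, inner_sub_right, hkey]
  have hCsym : ∀ p q : F, ⟪C p, q⟫ = ⟪p, C q⟫ := by
    have step1 : ∀ (w : U.domain) (p : F), ⟪C p, (w : F)⟫ = ⟪p, C (w : F)⟫ := by
      intro w
      have hfg : (fun p : F => ⟪C p, (w : F)⟫) = fun p : F => ⟪p, C (w : F)⟫ := by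
        refine Continuous.ext_on hUdense
          (C.continuous.inner continuous_const)
          (continuous_id.inner continuous_const) ?_
        intro p hp
        show ⟪C p, (w : F)⟫ = ⟪p, C (w : F)⟫
        have hp1 : C p = C0 ⟨p, hp⟩ := hCeq ⟨p, hp⟩
        rw [hp1, hCeq w]
        exact hC0sym ⟨p, hp⟩ w
      exact fun p => congrFun hfg p
    intro p q
    have hfg : (fun q : F => ⟪C p, q⟫) = fun q : F => ⟪p, C q⟫ := by
      refine Continuous.ext_on hUdense
        (continuous_const.inner continuous_id)
        (continuous_const.inner C.continuous) ?_
      intro r hr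
      show ⟪C p, r⟫ = ⟪p, C r⟫
      exact step1 ⟨r, hr⟩ p
    exact congrFun hfg q
  -- the second resolvent identity
  have heq2C : ∀ (y : U.domain) (hy : U y ∈ T.domain),
      C (T ⟨U y, hy⟩ - l • (y : F)) = y := by
    intro y hy
    refine hUdense.denseRange_val.eq_of_inner_left ℝ fun v => ?_
    have hA : ⟪T ⟨U y, hy⟩, C0 v⟫ = ⟪(y : F), l • C0 v + (v : F)⟫ := by
      calc ⟪T ⟨U y, hy⟩, C0 v⟫
          = ⟪U y, U ⟨C0 v, hC0mem v⟩⟫ := hTU ⟨U y, hy⟩ ⟨C0 v, hC0mem v⟩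
        _ = ⟪U y, B (U v)⟫ := by rw [hUC0 v]
        _ = ⟪(y : F), (T ⟨B (U v), hB (U v)⟩ : F)⟫ := hUS y ⟨B (U v), hB (U v)⟩
        _ = ⟪(y : F), l • C0 v + (v : F)⟫ := by rw [← hGapp (U v), hGC0 v]
    calc ⟪C (T ⟨U y, hy⟩ - l • (y : F)), (v : F)⟫
        = ⟪T ⟨U y, hy⟩ - l • (y : F), C (v : F)⟫ := hCsym _ _
      _ = ⟪T ⟨U y, hy⟩ - l • (y : F), C0 v⟫ := by rw [hCeq v]
      _ = ⟪T ⟨U y, hy⟩, C0 v⟫ - l * ⟪(y : F), C0 v⟫ := by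
          rw [inner_sub_left, real_inner_smul_left]
      _ = ⟪(y : F), (v : F)⟫ := by
          rw [hA, inner_add_right, real_inner_smul_right]
          ring
  exact ⟨C, fun x => (main x).choose, fun x => (main x).choose_spec.choose,
    fun x => (main x).choose_spec.choose_spec, heq2C⟩

end SpecAux

end



/-- `l` belongs to the resolvent set of `S*S − l`: there is a bounded everywhere defined
two-sided inverse of `S*S − l`. -/
def ResolventSTS {E F : Type*} [NormedAddCommGroup E] [InnerProductSpace ℝ E]
    [NormedAddCommGroup F] [InnerProductSpace ℝ F] [CompleteSpace E] [CompleteSpace F]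
    (S : E →ₗ.[ℝ] F) (l : ℝ) : Prop :=
  ∃ B : E →L[ℝ] E, ∃ hB : ∀ x : E, B x ∈ S.domain,
    ∃ hB' : ∀ x : E, S ⟨B x, hB x⟩ ∈ S.adjoint.domain,
      (∀ x : E, S.adjoint ⟨S ⟨B x, hB x⟩, hB' x⟩ - l • B x = x) ∧
      (∀ (y : S.domain) (hy : S y ∈ S.adjoint.domain),
        B (S.adjoint ⟨S y, hy⟩ - l • (y : E)) = y)

/-- `l` belongs to the resolvent set of `SS* − l`. -/
def ResolventSST {E F : Type*} [NormedAddCommGroup E] [InnerProductSpace ℝ E]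
    [NormedAddCommGroup F] [InnerProductSpace ℝ F] [CompleteSpace E] [CompleteSpace F]
    (S : E →ₗ.[ℝ] F) (l : ℝ) : Prop :=
  ∃ B : F →L[ℝ] F, ∃ hB : ∀ x : F, B x ∈ S.adjoint.domain,
    ∃ hB' : ∀ x : F, S.adjoint ⟨B x, hB x⟩ ∈ S.domain,
      (∀ x : F, S ⟨S.adjoint ⟨B x, hB x⟩, hB' x⟩ - l • B x = x) ∧
      (∀ (y : S.adjoint.domain) (hy : S.adjoint y ∈ S.domain),
        B (S ⟨S.adjoint y, hy⟩ - l • (y : F)) = y)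

/-- for a closed densely defined `S`, the spectra of `S*S` and `SS*`
agree away from zero: `λ ≠ 0` is in the resolvent set of one iff of the other. -/
theorem spectrum_STS_eq_SST {E F : Type*} [NormedAddCommGroup E] [InnerProductSpace ℝ E]
    [NormedAddCommGroup F] [InnerProductSpace ℝ F] [CompleteSpace E] [CompleteSpace F]
    (S : E →ₗ.[ℝ] F) (hdense : Dense (S.domain : Set E)) (hclosed : S.IsClosed)
    (l : ℝ) (hl : l ≠ 0) :
    ResolventSTS S l ↔ ResolventSST S l := by
  constructor
  · rintro ⟨B, hB, hB', h1, h2⟩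
    exact SpecAux.pairCore S S.adjoint (LinearPMap.adjoint_isFormalAdjoint hdense).symm
      (SpecAux.adjoint_dense hdense hclosed) hclosed (SpecAux.adjoint_isClosed hdense)
      l hl B hB hB' h1 h2
  · rintro ⟨B, hB, hB', h1, h2⟩
    exact SpecAux.pairCore S.adjoint S (LinearPMap.adjoint_isFormalAdjoint hdense)
      hdense (SpecAux.adjoint_isClosed hdense) hclosed l hl B hB hB' h1 h2
end

section
/- Let Σ be a finite simplicial complex with weight m. For τ ∈ Σ with dim(τ) = k (i.e., |τ| = k+1), the quadratic form Q⁺(ω) = Σ_σ m(σ)(δω(σ))² satisfies c⁺(τ) := Q⁺(1_τ) − Σ_{τ'≠τ} |Q⁺(1_τ,1_{τ'})| = −k · Σ_{σ≻τ} m(σ), where 1_τ is the indicator of τ. -/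
open Finset

/-- `τ` is a face of `σ`, i.e. `τ ⊂ σ` and `|σ \ τ| = 1`. -/
def Fc {V : Type*} [DecidableEq V] (τ σ : Finset V) : Prop := τ ⊆ σ ∧ σ.card = τ.card + 1

instance {V : Type*} [DecidableEq V] (τ σ : Finset V) : Decidable (Fc τ σ) := by
  unfold Fc; infer_instance

/-- `S` is a simplicial complex: closed under taking subsets. -/
def IsCplx {V : Type*} [DecidableEq V] (S : Finset (Finset V)) : Prop :=
  ∀ σ ∈ S, ∀ τ : Finset V, τ ⊆ σ → τ ∈ S

/-- Coboundary operator: `δω(σ) = ∑_{τ ≺ σ} θ(τ,σ) ω(τ)` (sum over subsets of `σ`, which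
suffices since `θ(τ,σ) = 0` unless `τ ≺ σ`). -/
def dC {V : Type*} [DecidableEq V] (θ : Finset V → Finset V → ℝ) (ω : Finset V → ℝ)
    (σ : Finset V) : ℝ :=
  ∑ τ ∈ σ.powerset, θ τ σ * ω τ

/-- Boundary operator: `∂ω(ρ) = (1/m(ρ)) ∑_{τ ≻ ρ} m(τ) θ(ρ,τ) ω(τ)`. -/
noncomputable def bd {V : Type*} [DecidableEq V] (S : Finset (Finset V)) (m : Finset V → ℝ)
    (θ : Finset V → Finset V → ℝ) (ω : Finset V → ℝ) (ρ : Finset V) : ℝ :=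
  (m ρ)⁻¹ * ∑ τ ∈ S, m τ * θ ρ τ * ω τ

/-- `θ` takes values `±1` exactly on face pairs of `S` and `0` otherwise. -/
def ThetaGood {V : Type*} [DecidableEq V] (S : Finset (Finset V))
    (θ : Finset V → Finset V → ℝ) : Prop :=
  ∀ τ σ : Finset V, τ ∈ S → σ ∈ S →
    (Fc τ σ → (θ τ σ = 1 ∨ θ τ σ = -1)) ∧ (¬ Fc τ σ → θ τ σ = 0)

/-- Indicator function of the simplex `τ`. -/
def ind {V : Type*} [DecidableEq V] (τ : Finset V) : Finset V → ℝ :=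
  fun ρ => if ρ = τ then 1 else 0

/-- the potential `c⁺(τ) = Q⁺(1_τ) − ∑_{τ'≠τ}|Q⁺(1_τ,1_{τ'})|`
equals `−k ∑_{σ ≻ τ} m(σ)` for a `k`-simplex `τ`. -/
theorem c_plus_formula {V : Type*} [DecidableEq V]
    (S : Finset (Finset V)) (hS : IsCplx S)
    (m : Finset V → ℝ) (hm : ∀ σ ∈ S, 0 < m σ)
    (θ : Finset V → Finset V → ℝ) (hθ : ThetaGood S θ)
    (hdd : ∀ ω : Finset V → ℝ, ∀ σ ∈ S, dC θ (dC θ ω) σ = 0)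
    (τ : Finset V) (hτ : τ ∈ S) (k : ℕ) (hk : τ.card = k + 1) :
    (∑ σ ∈ S, m σ * (dC θ (ind τ) σ * dC θ (ind τ) σ))
      - ∑ τ' ∈ S.erase τ, |∑ σ ∈ S, m σ * (dC θ (ind τ) σ * dC θ (ind τ') σ)|
      = -(k : ℝ) * ∑ σ ∈ S.filter (fun σ => Fc τ σ), m σ := by
  classical
  -- evaluation of the coboundary of an indicator
  have hd : ∀ ρ ∈ S, ∀ σ ∈ S, dC θ (ind ρ) σ = if Fc ρ σ then θ ρ σ else 0 := by
    intro ρ hρ σ hσ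
    unfold dC ind
    rw [Finset.sum_eq_single ρ (fun b _ hb => by simp [hb]) (fun h => by
      have hnf : ¬ Fc ρ σ := fun hf => h (Finset.mem_powerset.mpr hf.1)
      simp [(hθ ρ σ hρ hσ).2 hnf])]
    by_cases h : Fc ρ σ
    · simp [h]
    · simp [h, (hθ ρ σ hρ hσ).2 h]
  have hθabs : ∀ ρ σ : Finset V, ρ ∈ S → σ ∈ S → Fc ρ σ → |θ ρ σ| = 1 := by
    intro ρ σ hρ hσ hf
    rcases (hθ ρ σ hρ hσ).1 hf with h | h <;> rw [h] <;> norm_num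
  have hθsq : ∀ ρ σ : Finset V, ρ ∈ S → σ ∈ S → Fc ρ σ → θ ρ σ * θ ρ σ = 1 := by
    intro ρ σ hρ hσ hf
    rcases (hθ ρ σ hρ hσ).1 hf with h | h <;> rw [h] <;> norm_num
  -- the diagonal term
  have h1 : (∑ σ ∈ S, m σ * (dC θ (ind τ) σ * dC θ (ind τ) σ))
      = ∑ σ ∈ S.filter (fun σ => Fc τ σ), m σ := by
    rw [Finset.sum_filter]
    refine Finset.sum_congr rfl (fun σ hσ => ?_)
    rw [hd τ hτ σ hσ]
    by_cases h : Fc τ σ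
    · simp [h, hθsq τ σ hτ hσ h]
    · simp [h]
  -- the off-diagonal terms
  have h2 : ∀ τ' ∈ S.erase τ, |∑ σ ∈ S, m σ * (dC θ (ind τ) σ * dC θ (ind τ') σ)|
      = ∑ σ ∈ S, if Fc τ σ ∧ Fc τ' σ then m σ else 0 := by
    intro τ' hτ'mem
    obtain ⟨hne, hτ'S⟩ := Finset.mem_erase.mp hτ'mem
    have hsum : (∑ σ ∈ S, m σ * (dC θ (ind τ) σ * dC θ (ind τ') σ))
        = ∑ σ ∈ S.filter (fun σ => Fc τ σ ∧ Fc τ' σ), m σ * (θ τ σ * θ τ' σ) := by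
      rw [Finset.sum_filter]
      refine Finset.sum_congr rfl (fun σ hσ => ?_)
      rw [hd τ hτ σ hσ, hd τ' hτ'S σ hσ]
      by_cases ha : Fc τ σ <;> by_cases hb : Fc τ' σ <;> simp [ha, hb]
    rw [hsum, ← Finset.sum_filter]
    set F := S.filter (fun σ => Fc τ σ ∧ Fc τ' σ) with hF
    have hsub : F ⊆ {τ ∪ τ'} := by
      intro σ hσ
      rw [hF, Finset.mem_filter] at hσ
      obtain ⟨hσS, hfa, hfb⟩ := hσ
      have hcards : τ'.card = τ.card := by
        have := hfa.2; have := hfb.2; omega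
      have hnotsub : ¬ τ' ⊆ τ := by
        intro h
        exact hne (Finset.eq_of_subset_of_card_le h (le_of_eq hcards.symm))
      obtain ⟨x, hxτ', hxτ⟩ := Finset.not_subset.mp hnotsub
      have hss : τ ⊂ τ ∪ τ' := by
        refine Finset.ssubset_iff_of_subset Finset.subset_union_left |>.mpr ?_
        exact ⟨x, Finset.mem_union_right _ hxτ', hxτ⟩
      have hlt : τ.card < (τ ∪ τ').card := Finset.card_lt_card hss
      have husub : τ ∪ τ' ⊆ σ := Finset.union_subset hfa.1 hfb.1
      have hca := hfa.2
      have : τ ∪ τ' = σ := Finset.eq_of_subset_of_card_le husub (by omega)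
      simp [this]
    rcases Finset.subset_singleton_iff.mp hsub with hFe | hFe
    · simp [hFe]
    · have hmem : τ ∪ τ' ∈ F := by rw [hFe]; exact Finset.mem_singleton_self _
      rw [hF, Finset.mem_filter] at hmem
      obtain ⟨huS, hfa, hfb⟩ := hmem
      rw [hFe, Finset.sum_singleton, Finset.sum_singleton, abs_mul, abs_mul,
        hθabs τ _ hτ huS hfa, hθabs τ' _ hτ'S huS hfb,
        abs_of_pos (hm _ huS)]
      ring
  rw [h1, Finset.sum_congr rfl h2, Finset.sum_comm]
  -- counting the faces of each coface
  have h3 : ∀ σ ∈ S, (∑ τ' ∈ S.erase τ, if Fc τ σ ∧ Fc τ' σ then m σ else 0)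
      = if Fc τ σ then ((k : ℝ) + 1) * m σ else 0 := by
    intro σ hσ
    by_cases h : Fc τ σ
    · have hcount : ((S.erase τ).filter (fun τ' => Fc τ' σ)).card = k + 1 := by
        have himg : (S.erase τ).filter (fun τ' => Fc τ' σ) = (σ.image σ.erase).erase τ := by
          ext ρ
          simp only [Finset.mem_filter, Finset.mem_erase, Finset.mem_image]
          constructor
          · rintro ⟨⟨hρτ, hρS⟩, hfc⟩
            refine ⟨hρτ, ?_⟩
            have hsd : (σ \ ρ).card = 1 := by
              have := hfc.2; rw [Finset.card_sdiff_of_subset hfc.1]; omega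
            obtain ⟨x, hx⟩ := Finset.card_eq_one.mp hsd
            have hxmem : x ∈ σ \ ρ := hx ▸ Finset.mem_singleton_self x
            rw [Finset.mem_sdiff] at hxmem
            refine ⟨x, hxmem.1, ?_⟩
            have hsub2 : ρ ⊆ σ.erase x := by
              intro y hy
              exact Finset.mem_erase.mpr ⟨fun hyx => hxmem.2 (hyx ▸ hy), hfc.1 hy⟩
            have hcard2 : (σ.erase x).card ≤ ρ.card := by
              rw [Finset.card_erase_of_mem hxmem.1]; have := hfc.2; omega
            exact (Finset.eq_of_subset_of_card_le hsub2 hcard2).symm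
          · rintro ⟨hρτ, x, hxσ, rfl⟩
            have hfc : Fc (σ.erase x) σ := by
              constructor
              · exact Finset.erase_subset x σ
              · rw [Finset.card_erase_of_mem hxσ]
                have : 1 ≤ σ.card := Finset.card_pos.mpr ⟨x, hxσ⟩
                omega
            exact ⟨⟨hρτ, hS σ hσ _ (Finset.erase_subset x σ)⟩, hfc⟩
        rw [himg]
        have hτimg : τ ∈ σ.image σ.erase := by
          have hsd : (σ \ τ).card = 1 := by
            have := h.2; rw [Finset.card_sdiff_of_subset h.1]; omega
          obtain ⟨x, hx⟩ := Finset.card_eq_one.mp hsd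
          have hxmem : x ∈ σ \ τ := hx ▸ Finset.mem_singleton_self x
          rw [Finset.mem_sdiff] at hxmem
          refine Finset.mem_image.mpr ⟨x, hxmem.1, ?_⟩
          have hsub2 : τ ⊆ σ.erase x := by
            intro y hy
            exact Finset.mem_erase.mpr ⟨fun hyx => hxmem.2 (hyx ▸ hy), h.1 hy⟩
          have hcard2 : (σ.erase x).card ≤ τ.card := by
            rw [Finset.card_erase_of_mem hxmem.1]; have := h.2; omega
          exact (Finset.eq_of_subset_of_card_le hsub2 hcard2).symm
        rw [Finset.card_erase_of_mem hτimg, Finset.card_image_of_injOn (Finset.erase_injOn σ)]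
        have := h.2; omega
      calc (∑ τ' ∈ S.erase τ, if Fc τ σ ∧ Fc τ' σ then m σ else 0)
          = ∑ τ' ∈ (S.erase τ).filter (fun τ' => Fc τ' σ), m σ := by
            rw [Finset.sum_filter]
            exact Finset.sum_congr rfl (fun τ' _ => by by_cases hb : Fc τ' σ <;> simp [h, hb])
        _ = if Fc τ σ then ((k : ℝ) + 1) * m σ else 0 := by
            rw [Finset.sum_const, hcount, if_pos h, nsmul_eq_mul]
            push_cast; ring
    · simp only [h, if_false, false_and]
      simp
  rw [Finset.sum_congr rfl h3]
  have h4 : (∑ σ ∈ S, if Fc τ σ then ((k : ℝ) + 1) * m σ else 0)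
      = ((k : ℝ) + 1) * ∑ σ ∈ S.filter (fun σ => Fc τ σ), m σ := by
    rw [Finset.mul_sum, Finset.sum_filter]
  rw [h4]
  ring
end
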